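/- arXiv:1606.04312 — 2 statements merged into one kernel-verified Lean document; each statement's English description precedes it below -/
import Mathlib

section
/- Let n > 1 and equip Aut(ℂⁿ) with the compact-open topology. Then GL_n(ℂ), viewed as the subgroup of linear automorphisms inside Aut(ℂⁿ), is a deformation retract of Aut(ℂⁿ); in particular the inclusion GL_n(ℂ) ↪ Aut(ℂⁿ) is a homotopy equivalence. -/
open scoped Topology
open Asymptotics Set Filter

noncomputable section

/-- The complex Euclidean space `ℂⁿ`. -/
abbrev Cn (n : ℕ) := EuclideanSpace ℂ (Fin n)

/-- A map is holomorphic on a subset `S` of a complex normed space if near every point of `S`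
it agrees on `S` with a map holomorphic on an open neighborhood of that point. -/
def HoloOn {E F : Type} [NormedAddCommGroup E] [NormedSpace ℂ E]
    [NormedAddCommGroup F] [NormedSpace ℂ F] (S : Set E) (f : E → F) : Prop :=
  ∀ p ∈ S, ∃ U : Set E, IsOpen U ∧ p ∈ U ∧ ∃ g : E → F,
    DifferentiableOn ℂ g U ∧ EqOn f g (S ∩ U)

/-- `X ⊆ ℂ^N` is a closed analytic subset: it is closed and locally cut out by finitely many
holomorphic functions.  By the embedding theorem this is a model for a finite dimensional
reduced Stein space. -/
def IsClosedAnalyticSubset {N : ℕ} (X : Set (Cn N)) : Prop :=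
  IsClosed X ∧ ∀ p ∈ X, ∃ U : Set (Cn N), IsOpen U ∧ p ∈ U ∧
    ∃ (m : ℕ) (g : Fin m → Cn N → ℂ), (∀ i, DifferentiableOn ℂ (g i) U) ∧
      X ∩ U = {z ∈ U | ∀ i, g i z = 0}

/-- `X ⊆ ℂ^N` is a closed complex submanifold of `ℂ^N` (locally biholomorphically
straightened to a coordinate subspace).  By the embedding theorem this is a model for a
Stein manifold. -/
def IsSteinSubmanifold {N : ℕ} (X : Set (Cn N)) : Prop :=
  IsClosed X ∧ ∀ p ∈ X, ∃ (d : ℕ) (U : Set (Cn N)) (φ ψ : Cn N → Cn N),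
    IsOpen U ∧ p ∈ U ∧ DifferentiableOn ℂ φ U ∧ IsOpen (φ '' U) ∧
    DifferentiableOn ℂ ψ (φ '' U) ∧ (∀ z ∈ U, ψ (φ z) = z) ∧
    X ∩ U = {z ∈ U | ∀ i : Fin N, d ≤ (i : ℕ) → φ z i = 0}

/-- `f` is a holomorphic automorphism of `ℂⁿ`. -/
def IsAutCn {n : ℕ} (f : Cn n → Cn n) : Prop :=
  Function.Bijective f ∧ Differentiable ℂ f ∧
    ∃ g : Cn n → Cn n, Differentiable ℂ g ∧
      Function.LeftInverse g f ∧ Function.RightInverse g f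

/-- The complex Jacobian matrix of `f` at `z`. -/
def jacMatrix {n : ℕ} (f : Cn n → Cn n) (z : Cn n) : Matrix (Fin n) (Fin n) ℂ :=
  fun i j => fderiv ℂ f z (EuclideanSpace.single j 1) i

/-- The complex Jacobian determinant of `f` at `z`. -/
def jacDet {n : ℕ} (f : Cn n → Cn n) (z : Cn n) : ℂ :=
  (jacMatrix f z).det

/-- A map `ℂⁿ → ℂⁿ` is volume preserving if its Jacobian determinant is `1` everywhere. -/
def VolumePreserving {n : ℕ} (f : Cn n → Cn n) : Prop :=
  ∀ z, jacDet f z = 1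

/-- `f : ℂⁿ → ℂⁿ` is a polynomial map of (total) degree at most `k`. -/
def IsPolyMapDegLe (n k : ℕ) (f : Cn n → Cn n) : Prop :=
  ∃ p : Fin n → MvPolynomial (Fin n) ℂ, (∀ i, (p i).totalDegree ≤ k) ∧
    ∀ z : Cn n, ∀ i : Fin n, f z i = MvPolynomial.eval (fun j => z j) (p i)

/-- `P` is a holomorphic family, parametrized by `X ⊆ ℂ^N`, of nondegenerate `k`-jets at
`p ∈ ℂⁿ` sending `p` to `q`, i.e. of elements of `J^k_{p,q}(ℂⁿ)`. -/
def IsHolJetFamily {N : ℕ} (X : Set (Cn N)) {n : ℕ} (k : ℕ) (p q : Cn n)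
    (P : Cn N → Cn n → Cn n) : Prop :=
  HoloOn (X ×ˢ (univ : Set (Cn n))) (fun w : Cn N × Cn n => P w.1 w.2) ∧
  (∀ x ∈ X, IsPolyMapDegLe n k (P x)) ∧
  (∀ x ∈ X, P x p = q) ∧
  (∀ x ∈ X, (jacMatrix (P x) p).det ≠ 0)

/-- `F` is a holomorphic family, parametrized by `X`, of holomorphic automorphisms of `ℂⁿ`,
i.e. a holomorphic map `X → Aut(ℂⁿ)`. -/
def IsHolFamilyAut {N n : ℕ} (X : Set (Cn N)) (F : Cn N → Cn n → Cn n) : Prop :=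
  (∀ x ∈ X, IsAutCn (F x)) ∧
  HoloOn (X ×ˢ (univ : Set (Cn n))) (fun w : Cn N × Cn n => F w.1 w.2)

/-- The family `F : X → Aut(ℂⁿ)` is nullhomotopic: it is homotopic, through families of
holomorphic automorphisms, to a constant family. -/
def NullhomotopicFamilyAut {N n : ℕ} (X : Set (Cn N)) (F : Cn N → Cn n → Cn n) : Prop :=
  ∃ H : ℝ → Cn N → Cn n → Cn n,
    ContinuousOn (fun w : ℝ × Cn N × Cn n => H w.1 w.2.1 w.2.2)
      (Icc (0 : ℝ) 1 ×ˢ X ×ˢ (univ : Set (Cn n))) ∧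
    (∀ t ∈ Icc (0 : ℝ) 1, ∀ x ∈ X, IsAutCn (H t x)) ∧
    (∀ x ∈ X, H 1 x = F x) ∧
    (∃ f₀, ∀ x ∈ X, H 0 x = f₀)

/-- A matrix-valued map on `X` is nullhomotopic as a map into `GLₙ(ℂ)`: it is homotopic,
through maps with invertible values, to a constant map. -/
def NullhomotopicToGL {N n : ℕ} (X : Set (Cn N)) (Q : Cn N → Matrix (Fin n) (Fin n) ℂ) : Prop :=
  ∃ H : ℝ → Cn N → Matrix (Fin n) (Fin n) ℂ,
    (∀ i j, ContinuousOn (fun w : ℝ × Cn N => H w.1 w.2 i j) (Icc (0 : ℝ) 1 ×ˢ X)) ∧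
    (∀ t ∈ Icc (0 : ℝ) 1, ∀ x ∈ X, (H t x).det ≠ 0) ∧
    (∀ x ∈ X, H 1 x = Q x) ∧
    (∃ A, ∀ x ∈ X, H 0 x = A)

/-- The point `(c, 0, …, 0) ∈ ℂⁿ`. -/
def axisPt (n : ℕ) (c : ℂ) : Cn n :=
  WithLp.toLp 2 (fun i : Fin n => if (i : ℕ) = 0 then c else 0)

/-- A sequence in `ℂⁿ` is tame if some holomorphic automorphism takes it to the sequence
`(j, 0, …, 0)`, `j = 1, 2, …`. -/
def TameSeq {n : ℕ} (a : ℕ → Cn n) : Prop :=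
  ∃ F : Cn n → Cn n, IsAutCn F ∧ ∀ j : ℕ, F (a j) = axisPt n ((j : ℂ) + 1)

/-- A sequence in `ℂⁿ` is very tame if some volume preserving holomorphic automorphism takes
it to the sequence `(j, 0, …, 0)`, `j = 1, 2, …`. -/
def VeryTameSeq {n : ℕ} (a : ℕ → Cn n) : Prop :=
  ∃ F : Cn n → Cn n, IsAutCn F ∧ VolumePreserving F ∧
    ∀ j : ℕ, F (a j) = axisPt n ((j : ℂ) + 1)

/-- The automorphism group `Aut(ℂⁿ)` as a subset of `C(ℂⁿ, ℂⁿ)` with the compact-open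
topology. -/
def AutSet (n : ℕ) : Set C(Cn n, Cn n) :=
  {f | IsAutCn f}

/-- `GLₙ(ℂ)`, viewed as the subset of linear automorphisms inside `Aut(ℂⁿ) ⊆ C(ℂⁿ, ℂⁿ)`. -/
def LinAutSet (n : ℕ) : Set C(Cn n, Cn n) :=
  {f | IsAutCn f ∧ IsLinearMap ℂ f}

/-- The inclusion `GLₙ(ℂ) ↪ Aut(ℂⁿ)` (of subspaces of `C(ℂⁿ, ℂⁿ)`). -/
def linAutInclusion (n : ℕ) : C(LinAutSet n, AutSet n) :=
  ⟨fun f => ⟨f.1, f.2.1⟩, (continuous_subtype_val.subtype_mk _)⟩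


/-!
Deform `f ∈ Aut(ℂⁿ)` by `H t f z = t⁻¹ (f (t z) - f 0) + t f 0`. This is `f` at `t = 1`, it tends
to the linear part `f'(0)` as `t → 0`, and for `t ≠ 0` it is `f` composed with affine automorphisms,
so it stays in `Aut(ℂⁿ)`; on `GLₙ(ℂ)` it is constant. Continuity at `t = 0` in the compact-open
topology comes from Cauchy estimates along complex lines: if `‖f‖ ≤ M` on the ball of radius `2R`,
then `‖H t f - f'(0)‖ ≤ 2 M |t|` on the ball of radius `R`, and `‖g'(0) - f'(0)‖` is controlled by
`sup ‖g - f‖` on a sphere.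
-/

open Metric
open scoped Nat

section CauchyEstimates

variable {E F : Type*} [NormedAddCommGroup E] [NormedSpace ℂ E] [NormedAddCommGroup F]

lemma norm_inv_factorial_smul_iteratedDeriv_le [NormedSpace ℂ F] [CompleteSpace F] {f : ℂ → F}
    {c : ℂ} {R M : ℝ} (hR : 0 < R) (hf : DiffContOnCl ℂ f (ball c R))
    (hM : ∀ w ∈ sphere c R, ‖f w‖ ≤ M) (k : ℕ) :
    ‖(k ! : ℂ)⁻¹ • iteratedDeriv k f c‖ ≤ M / R ^ k := by
  have hk : (0 : ℝ) < k ! := by exact_mod_cast k.factorial_pos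
  rw [norm_smul, norm_inv, Complex.norm_natCast, inv_mul_le_iff₀ hk, mul_div_assoc']
  exact Complex.norm_iteratedDeriv_le_of_forall_mem_sphere_norm_le k hR hf hM

lemma norm_sub_sub_smul_deriv_le [NormedSpace ℂ F] [CompleteSpace F] {f : ℂ → F} {c z : ℂ}
    {R M : ℝ} (hR : 0 < R) (hf : DiffContOnCl ℂ f (ball c R))
    (hM : ∀ w ∈ sphere c R, ‖f w‖ ≤ M) (hz : ‖z - c‖ ≤ R / 2) :
    ‖f z - f c - (z - c) • deriv f c‖ ≤ 2 * M * (‖z - c‖ / R) ^ 2 := by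
  set q := ‖z - c‖ / R
  have hq0 : 0 ≤ q := by positivity
  have hq : q ≤ 1 / 2 := by rw [div_le_iff₀ hR]; linarith
  have hM0 : 0 ≤ M := by
    obtain ⟨w, hw⟩ := (NormedSpace.sphere_nonempty (x := c)).2 hR.le
    exact (norm_nonneg _).trans (hM w hw)
  have hsum := Complex.hasSum_taylorSeries_on_ball hf.differentiableOn
    (mem_ball_iff_norm.2 (hz.trans_lt (half_lt_self hR)))
  have htail := (hasSum_nat_add_iff' 2).2 hsum
  have hfirst : ∑ k ∈ Finset.range 2, (k ! : ℂ)⁻¹ • (z - c) ^ k • iteratedDeriv k f c =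
      f c + (z - c) • deriv f c := by
    simp [Finset.sum_range_succ]
  rw [hfirst, ← sub_sub] at htail
  have hgeom := (hasSum_geometric_of_lt_one hq0 (hq.trans_lt one_half_lt_one)).mul_left (M * q ^ 2)
  refine (htail.norm_le_of_bounded hgeom fun k => ?_).trans ?_
  · rw [smul_comm, norm_smul, norm_pow]
    calc ‖z - c‖ ^ (k + 2) * ‖(((k + 2) ! : ℕ) : ℂ)⁻¹ • iteratedDeriv (k + 2) f c‖
        ≤ ‖z - c‖ ^ (k + 2) * (M / R ^ (k + 2)) := by
          gcongr; exact norm_inv_factorial_smul_iteratedDeriv_le hR hf hM (k + 2)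
      _ = M * q ^ 2 * q ^ k := by simp only [q, div_pow]; ring
  · have : (1 - q)⁻¹ ≤ 2 := by rw [inv_le_comm₀ (by linarith) two_pos]; linarith
    calc M * q ^ 2 * (1 - q)⁻¹ ≤ M * q ^ 2 * 2 := by gcongr
      _ = 2 * M * q ^ 2 := by ring

lemma norm_comp_add_smul_le_on_sphere {f : E → F} {x v : E} {r M : ℝ} (hv : v ≠ 0)
    (hM : ∀ w ∈ sphere x r, ‖f w‖ ≤ M) :
    ∀ s ∈ sphere (0 : ℂ) (r / ‖v‖), ‖f (x + s • v)‖ ≤ M := by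
  intro s hs
  refine hM _ ?_
  rw [mem_sphere_iff_norm, add_sub_cancel_left, norm_smul, mem_sphere_zero_iff_norm.1 hs,
    div_mul_cancel₀ _ (norm_ne_zero_iff.2 hv)]

variable [NormedSpace ℂ F]

lemma Differentiable.comp_add_smul {f : E → F} (hf : Differentiable ℂ f) (x v : E) :
    Differentiable ℂ (fun s : ℂ => f (x + s • v)) :=
  hf.comp ((differentiable_id.smul_const v).const_add x)

lemma hasDerivAt_comp_add_smul {f : E → F} {x : E} (hf : DifferentiableAt ℂ f x) (v : E) :
    HasDerivAt (fun s : ℂ => f (x + s • v)) (fderiv ℂ f x v) 0 := by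
  have hline : HasDerivAt (fun s : ℂ => x + s • v) v 0 := by
    simpa using ((hasDerivAt_id (0 : ℂ)).smul_const v).const_add x
  have hfx : HasFDerivAt f (fderiv ℂ f x) (x + (0 : ℂ) • v) := by simpa using hf.hasFDerivAt
  exact hfx.comp_hasDerivAt (0 : ℂ) hline

lemma norm_fderiv_apply_le {f : E → F} {x : E} {r M : ℝ} (hf : Differentiable ℂ f) (hr : 0 < r)
    (hM : ∀ w ∈ sphere x r, ‖f w‖ ≤ M) (v : E) : ‖fderiv ℂ f x v‖ ≤ M * ‖v‖ / r := by
  rcases eq_or_ne v 0 with rfl | hv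
  · simp
  have h := Complex.norm_deriv_le_of_forall_mem_sphere_norm_le (by positivity)
    (hf.comp_add_smul x v).diffContOnCl (norm_comp_add_smul_le_on_sphere hv hM)
  rwa [(hasDerivAt_comp_add_smul (hf x) v).deriv, div_div_eq_mul_div] at h

lemma norm_sub_sub_fderiv_apply_le [CompleteSpace F] {f : E → F} {x v : E} {r M : ℝ}
    (hf : Differentiable ℂ f) (hr : 0 < r) (hM : ∀ w ∈ sphere x r, ‖f w‖ ≤ M)
    (hv : ‖v‖ ≤ r / 2) : ‖f (x + v) - f x - fderiv ℂ f x v‖ ≤ 2 * M * (‖v‖ / r) ^ 2 := by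
  rcases eq_or_ne v 0 with rfl | hv0
  · simp
  have hv' : ‖(1 : ℂ) - 0‖ ≤ r / ‖v‖ / 2 := by
    rw [sub_zero, norm_one, div_div, le_div_iff₀ (by positivity)]; linarith
  have h := norm_sub_sub_smul_deriv_le (by positivity) (hf.comp_add_smul x v).diffContOnCl
    (norm_comp_add_smul_le_on_sphere hv0 hM) hv'
  rw [(hasDerivAt_comp_add_smul (hf x) v).deriv] at h
  simpa [div_div_eq_mul_div] using h

end CauchyEstimates

section DeformationRetraction

variable {X : Type*} [TopologicalSpace X]

def IsDeformationRetraction (H : ℝ → X → X) (A B : Set X) : Prop :=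
  ContinuousOn (fun w : ℝ × X => H w.1 w.2) (Icc (0 : ℝ) 1 ×ˢ A) ∧
    (∀ t ∈ Icc (0 : ℝ) 1, ∀ x ∈ A, H t x ∈ A) ∧
    (∀ x ∈ A, H 1 x = x) ∧
    (∀ x ∈ A, H 0 x ∈ B) ∧
    (∀ x ∈ B, H 0 x = x)

lemma IsDeformationRetraction.exists_homotopy_inverse {H : ℝ → X → X} {A B : Set X}
    (hH : IsDeformationRetraction H A B) (ι : C(B, A)) (hι : ∀ b, (ι b : X) = b) :
    ∃ r : C(A, B), (ι.comp r).Homotopic (ContinuousMap.id A) ∧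
      (r.comp ι).Homotopic (ContinuousMap.id B) := by
  obtain ⟨hcont, hmaps, hone, hzero, hzero_B⟩ := hH
  have hcontI : Continuous fun p : unitInterval × A => H p.1 p.2 :=
    hcont.comp_continuous (f := fun p : unitInterval × A => ((p.1 : ℝ), (p.2 : X)))
      (by fun_prop) fun p => ⟨p.1.2, p.2.2⟩
  let r : C(A, B) := ⟨fun x => ⟨H 0 x, hzero x x.2⟩, (hcont.comp_continuous
    (continuous_const.prodMk continuous_subtype_val) fun x => ⟨left_mem_Icc.2 zero_le_one, x.2⟩)
    |>.subtype_mk _⟩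
  have hr : r.comp ι = ContinuousMap.id B := by
    ext b
    simp [r, hι, hzero_B b b.2]
  refine ⟨r, ⟨{ toFun := fun p => ⟨H p.1 p.2, hmaps _ p.1.2 _ p.2.2⟩
                continuous_toFun := hcontI.subtype_mk _
                map_zero_left := fun x => Subtype.ext (hι (r x)).symm
                map_one_left := fun x => Subtype.ext (hone x x.2) }⟩, hr ▸ .refl _⟩

end DeformationRetraction

section LinearizationHomotopy

variable {E F : Type*} [NormedAddCommGroup E] [NormedSpace ℂ E] [NormedAddCommGroup F]
  [NormedSpace ℂ F]

def linearPart (f : C(E, F)) : C(E, F) :=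
  ⟨fderiv ℂ f 0, (fderiv ℂ f 0).continuous⟩

def rescale (t : ℝ) (f : C(E, F)) : C(E, F) :=
  (t : ℂ)⁻¹ • (f.comp ((t : ℂ) • ContinuousMap.id E) - ContinuousMap.const E (f 0)) +
    (t : ℂ) • ContinuousMap.const E (f 0)

def linearizationHomotopy (t : ℝ) (f : C(E, F)) : C(E, F) :=
  if t = 0 then linearPart f else rescale t f

@[simp]
lemma linearPart_apply (f : C(E, F)) (z : E) : linearPart f z = fderiv ℂ f 0 z := rfl

@[simp]
lemma rescale_apply (t : ℝ) (f : C(E, F)) (z : E) :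
    rescale t f z = (t : ℂ)⁻¹ • (f ((t : ℂ) • z) - f 0) + (t : ℂ) • f 0 := by
  simp [rescale]

lemma linearizationHomotopy_zero (f : C(E, F)) : linearizationHomotopy 0 f = linearPart f :=
  if_pos rfl

lemma linearizationHomotopy_of_ne_zero {t : ℝ} (ht : t ≠ 0) (f : C(E, F)) :
    linearizationHomotopy t f = rescale t f :=
  if_neg ht

lemma linearizationHomotopy_one (f : C(E, F)) : linearizationHomotopy 1 f = f := by
  ext z
  simp [linearizationHomotopy_of_ne_zero one_ne_zero]

lemma linearPart_eq_self {f : C(E, F)} (hf : IsLinearMap ℂ f) : linearPart f = f := by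
  ext z
  let L : E →L[ℂ] F := ⟨IsLinearMap.mk' f hf, f.continuous⟩
  exact congrFun (congrArg DFunLike.coe (L.fderiv (x := 0))) z

lemma norm_linearizationHomotopy_sub_linearPart_le [CompleteSpace F] {f : C(E, F)} {t R M : ℝ}
    {z : E} (hf : Differentiable ℂ f) (hR : 0 < R) (hM : ∀ w ∈ closedBall 0 (2 * R), ‖f w‖ ≤ M)
    (hz : ‖z‖ ≤ R) (ht : |t| ≤ 1) :
    ‖linearizationHomotopy t f z - linearPart f z‖ ≤ 2 * M * |t| := by
  have hM0 : 0 ≤ M := (norm_nonneg _).trans (hM 0 (mem_closedBall_self (by positivity)))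
  rcases eq_or_ne t 0 with rfl | ht0
  · simp [linearizationHomotopy_zero]
  have htC : ‖(t : ℂ)‖ = |t| := Complex.norm_real t
  have hv : ‖(t : ℂ) • z‖ ≤ 2 * R / 2 := by
    rw [norm_smul, htC]; nlinarith [abs_nonneg t, norm_nonneg z]
  have hrem := norm_sub_sub_fderiv_apply_le hf (by positivity)
    (fun w hw => hM w (sphere_subset_closedBall hw)) (x := 0) hv
  rw [zero_add] at hrem
  have hsplit : linearizationHomotopy t f z - linearPart f z =
      (t : ℂ)⁻¹ • (f ((t : ℂ) • z) - f 0 - fderiv ℂ f 0 ((t : ℂ) • z)) + (t : ℂ) • f 0 := by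
    rw [linearizationHomotopy_of_ne_zero ht0, rescale_apply, linearPart_apply,
      (fderiv ℂ f 0).map_smul, smul_sub _ (f ((t : ℂ) • z) - f 0),
      inv_smul_smul₀ (by exact_mod_cast ht0)]
    abel
  have hq : ‖(t : ℂ) • z‖ / (2 * R) ≤ |t| / 2 := by
    rw [norm_smul, htC, div_le_div_iff₀ (by positivity) two_pos]; nlinarith [abs_nonneg t]
  calc ‖linearizationHomotopy t f z - linearPart f z‖
      ≤ |t|⁻¹ * (2 * M * (|t| / 2) ^ 2) + |t| * M := by
        rw [hsplit]
        refine (norm_add_le _ _).trans (add_le_add ?_ ?_) <;> rw [norm_smul]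
        · rw [norm_inv, htC]
          gcongr
          exact hrem.trans (by gcongr)
        · rw [htC]; gcongr; exact hM 0 (mem_closedBall_self (by positivity))
    _ ≤ 2 * M * |t| := by
        rw [show |t|⁻¹ * (2 * M * (|t| / 2) ^ 2) = M * |t| / 2 by
          field_simp [abs_ne_zero.2 ht0]]
        nlinarith [abs_nonneg t]

end LinearizationHomotopy

lemma ContinuousMap.eventually_forall_dist_lt {X Y : Type*} [TopologicalSpace X]
    [PseudoMetricSpace Y] (f : C(X, Y)) {K : Set X} (hK : IsCompact K) {ε : ℝ} (hε : 0 < ε) :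
    ∀ᶠ g in 𝓝 f, ∀ x ∈ K, dist (f x) (g x) < ε :=
  Metric.tendstoUniformlyOn_iff.1
    (ContinuousMap.tendsto_iff_forall_isCompact_tendstoUniformlyOn.1 tendsto_id K hK) ε hε

section Continuity

variable {E F : Type*} [NormedAddCommGroup E] [NormedSpace ℂ E] [ProperSpace E]
  [NormedAddCommGroup F] [NormedSpace ℂ F]

lemma continuousOn_linearPart :
    ContinuousOn (linearPart (E := E) (F := F)) {f : C(E, F) | Differentiable ℂ f} := by
  intro f₀ hf₀
  rw [ContinuousWithinAt, ContinuousMap.tendsto_iff_forall_isCompact_tendstoUniformlyOn]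
  intro K hK
  rw [Metric.tendstoUniformlyOn_iff]
  intro ε hε
  obtain ⟨R, hR, hKR⟩ := hK.isBounded.subset_closedBall_lt 0 0
  filter_upwards [self_mem_nhdsWithin, nhdsWithin_le_nhds
    (f₀.eventually_forall_dist_lt (isCompact_sphere 0 (2 * R)) hε)] with f hf hclose z hz
  have hz : ‖z‖ ≤ R := mem_closedBall_zero_iff.1 (hKR hz)
  have hdiff := norm_fderiv_apply_le (hf₀.sub hf) (by positivity) (M := ε)
    (fun w hw => (dist_eq_norm (f₀ w) (f w) ▸ (hclose w hw).le)) z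
  rw [fderiv_sub (hf₀ 0) (hf 0), sub_apply] at hdiff
  rw [linearPart_apply, linearPart_apply, dist_eq_norm]
  calc _ ≤ ε * ‖z‖ / (2 * R) := hdiff
    _ ≤ ε * R / (2 * R) := by gcongr
    _ < ε := by rw [mul_div_mul_right _ _ hR.ne', half_lt_self_iff]; exact hε

lemma tendsto_linearizationHomotopy_sub_linearPart [CompleteSpace F] (f₀ : C(E, F)) :
    Tendsto (fun w : ℝ × C(E, F) => linearizationHomotopy w.1 w.2 - linearPart w.2)
      (𝓝[univ ×ˢ {f : C(E, F) | Differentiable ℂ f}] (0, f₀)) (𝓝 0) := by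
  rw [ContinuousMap.tendsto_iff_forall_isCompact_tendstoUniformlyOn]
  intro K hK
  rw [Metric.tendstoUniformlyOn_iff]
  intro ε hε
  obtain ⟨R, hR, hKR⟩ := hK.isBounded.subset_closedBall_lt 0 0
  obtain ⟨M, hM⟩ := (isCompact_closedBall (0 : E) (2 * R)).exists_bound_of_continuousOn
    f₀.continuous.continuousOn
  have hsmall : Tendsto (fun w : ℝ × C(E, F) => 2 * (M + 1) * |w.1|) (𝓝 (0, f₀)) (𝓝 0) := by
    simpa using (by fun_prop : Continuous fun w : ℝ × C(E, F) => 2 * (M + 1) * |w.1|).tendsto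
      ((0 : ℝ), f₀)
  have hfst : Tendsto (fun w : ℝ × C(E, F) => |w.1|) (𝓝 (0, f₀)) (𝓝 0) := by
    simpa using (continuous_fst.abs.tendsto ((0 : ℝ), f₀))
  filter_upwards [self_mem_nhdsWithin, nhdsWithin_le_nhds (hsmall.eventually (gt_mem_nhds hε)),
    nhdsWithin_le_nhds (hfst.eventually (eventually_le_nhds one_pos)),
    nhdsWithin_le_nhds (continuous_snd.continuousAt.eventually
      (f₀.eventually_forall_dist_lt (isCompact_closedBall 0 (2 * R)) one_pos))]
    with w hw hwε hw1 hclose z hz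
  have hbound : ∀ u ∈ closedBall (0 : E) (2 * R), ‖w.2 u‖ ≤ M + 1 := fun u hu =>
    (norm_le_norm_add_norm_sub' (w.2 u) (f₀ u)).trans
      (add_le_add (hM u hu) (dist_eq_norm' (f₀ u) (w.2 u) ▸ (hclose u hu).le))
  rw [ContinuousMap.zero_apply, dist_zero_left, ContinuousMap.sub_apply]
  exact (norm_linearizationHomotopy_sub_linearPart_le hw.2 hR hbound
    (mem_closedBall_zero_iff.1 (hKR hz)) hw1).trans_lt hwε

lemma continuousAt_rescale {w : ℝ × C(E, F)} (hw : w.1 ≠ 0) :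
    ContinuousAt (fun w : ℝ × C(E, F) => rescale w.1 w.2) w := by
  have hscale : Continuous fun t : ℝ => (t : ℂ) • ContinuousMap.id E :=
    Complex.continuous_ofReal.smul continuous_const
  have hcomp : Continuous fun w : ℝ × C(E, F) => w.2.comp ((w.1 : ℂ) • ContinuousMap.id E) :=
    ContinuousMap.continuous_comp'.comp ((hscale.comp continuous_fst).prodMk continuous_snd)
  have hconst : Continuous fun w : ℝ × C(E, F) => ContinuousMap.const E (w.2 0) :=
    ContinuousMap.continuous_const'.comp ((continuous_eval_const 0).comp continuous_snd)
  have hinv : ContinuousAt (fun w : ℝ × C(E, F) => (w.1 : ℂ)⁻¹) w :=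
    (Complex.continuous_ofReal.comp continuous_fst).continuousAt.inv₀ (Complex.ofReal_ne_zero.2 hw)
  exact (hinv.smul (hcomp.sub hconst).continuousAt).add
    ((Complex.continuous_ofReal.comp continuous_fst).continuousAt.smul hconst.continuousAt)

lemma continuousOn_linearizationHomotopy [CompleteSpace F] :
    ContinuousOn (fun w : ℝ × C(E, F) => linearizationHomotopy w.1 w.2)
      (univ ×ˢ {f : C(E, F) | Differentiable ℂ f}) := by
  rintro ⟨t, f⟩ ⟨-, hf⟩
  rcases eq_or_ne t 0 with rfl | ht
  · have h := (tendsto_linearizationHomotopy_sub_linearPart f).add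
      ((continuousOn_linearPart f hf).comp continuous_snd.continuousWithinAt
        fun w hw => hw.2).tendsto
    simpa [ContinuousWithinAt, linearizationHomotopy_zero] using h
  · have hev : (fun w : ℝ × C(E, F) => rescale w.1 w.2) =ᶠ[𝓝 (t, f)]
        fun w => linearizationHomotopy w.1 w.2 := by
      filter_upwards [(isOpen_ne.preimage continuous_fst).mem_nhds ht] with w hw
      exact (linearizationHomotopy_of_ne_zero hw w.2).symm
    exact ((continuousAt_rescale ht).congr hev).continuousWithinAt

end Continuity

section Automorphisms

variable {n : ℕ}

lemma isAutCn_of_inverse {f g : Cn n → Cn n} (hf : Differentiable ℂ f) (hg : Differentiable ℂ g)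
    (hleft : Function.LeftInverse g f) (hright : Function.RightInverse g f) : IsAutCn f :=
  ⟨⟨hleft.injective, hright.surjective⟩, hf, g, hg, hleft, hright⟩

lemma IsAutCn.comp {f g : Cn n → Cn n} (hf : IsAutCn f) (hg : IsAutCn g) : IsAutCn (f ∘ g) := by
  obtain ⟨-, hdf, f', hdf', hlf, hrf⟩ := hf
  obtain ⟨-, hdg, g', hdg', hlg, hrg⟩ := hg
  exact isAutCn_of_inverse (hdf.comp hdg) (hdg'.comp hdf') (hlf.comp hlg) (hrf.comp hrg)

lemma isAutCn_smul_add {c : ℂ} (hc : c ≠ 0) (b : Cn n) : IsAutCn fun z : Cn n => c • z + b :=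
  isAutCn_of_inverse ((differentiable_id.const_smul c).add_const b)
    ((differentiable_id.sub_const b).const_smul c⁻¹)
    (fun z => by simp [inv_smul_smul₀ hc]) (fun w => by simp [smul_inv_smul₀ hc])

lemma IsAutCn.rescale {f : C(Cn n, Cn n)} (hf : IsAutCn f) {t : ℝ} (ht : t ≠ 0) :
    IsAutCn (rescale t f) := by
  have htC : (t : ℂ) ≠ 0 := Complex.ofReal_ne_zero.2 ht
  have h := ((isAutCn_smul_add (inv_ne_zero htC) ((t : ℂ) • f 0 - (t : ℂ)⁻¹ • f 0)).comp hf).comp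
    (isAutCn_smul_add htC 0)
  convert h using 1
  ext z : 1
  simp only [rescale_apply, Function.comp_apply, add_zero, smul_sub]
  abel

lemma IsAutCn.linearPart {f : C(Cn n, Cn n)} (hf : IsAutCn f) :
    IsAutCn (linearPart f) ∧ IsLinearMap ℂ (linearPart f) := by
  obtain ⟨-, hdf, g, hdg, hleft, hright⟩ := hf
  have hgf : (fderiv ℂ g (f 0)).comp (fderiv ℂ f 0) = ContinuousLinearMap.id ℂ (Cn n) := by
    rw [← fderiv_comp 0 (hdg _) (hdf _), hleft.comp_eq_id, fderiv_id]
  have hfg : (fderiv ℂ f 0).comp (fderiv ℂ g (f 0)) = ContinuousLinearMap.id ℂ (Cn n) := by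
    have h := fderiv_comp (f 0) (hdf (g (f 0))) (hdg (f 0))
    rw [hleft 0, hright.comp_eq_id, fderiv_id] at h
    exact h.symm
  refine ⟨isAutCn_of_inverse (fderiv ℂ f 0).differentiable (fderiv ℂ g (f 0)).differentiable
    (fun z => congrArg (· z) hgf) (fun w => congrArg (· w) hfg), ?_⟩
  exact (fderiv ℂ f 0).toLinearMap.isLinear

end Automorphisms

lemma isDeformationRetraction_linearizationHomotopy (n : ℕ) :
    IsDeformationRetraction (linearizationHomotopy (E := Cn n) (F := Cn n)) (AutSet n)
      (LinAutSet n) := by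
  have hlin : ∀ f ∈ AutSet n, linearizationHomotopy 0 f ∈ LinAutSet n := fun f hf =>
    linearizationHomotopy_zero f ▸ IsAutCn.linearPart hf
  refine ⟨continuousOn_linearizationHomotopy.mono (prod_mono (subset_univ _) fun f hf => hf.2.1),
    fun t _ f hf => ?_, fun f _ => linearizationHomotopy_one f, hlin,
    fun f hf => (linearizationHomotopy_zero f).trans (linearPart_eq_self hf.2)⟩
  rcases eq_or_ne t 0 with rfl | ht
  · exact (hlin f hf).1
  · exact linearizationHomotopy_of_ne_zero ht f ▸ IsAutCn.rescale hf ht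

theorem gl_deformation_retract_of_aut_general (n : ℕ) :
    (∃ H : ℝ → C(Cn n, Cn n) → C(Cn n, Cn n),
      ContinuousOn (fun w : ℝ × C(Cn n, Cn n) => H w.1 w.2)
        (Icc (0 : ℝ) 1 ×ˢ AutSet n) ∧
      (∀ t ∈ Icc (0 : ℝ) 1, ∀ f ∈ AutSet n, H t f ∈ AutSet n) ∧
      (∀ f ∈ AutSet n, H 1 f = f) ∧
      (∀ f ∈ AutSet n, H 0 f ∈ LinAutSet n) ∧
      (∀ f ∈ LinAutSet n, H 0 f = f)) ∧
    ∃ r : C(AutSet n, LinAutSet n),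
      ((linAutInclusion n).comp r).Homotopic (ContinuousMap.id _) ∧
      (r.comp (linAutInclusion n)).Homotopic (ContinuousMap.id _) := by
  have hH := isDeformationRetraction_linearizationHomotopy n
  exact ⟨⟨_, hH⟩, hH.exists_homotopy_inverse (linAutInclusion n) fun _ => rfl⟩

/-- `GLₙ(ℂ)` is a deformation retract of `Aut(ℂⁿ)` for the compact-open
topology; in particular the inclusion `GLₙ(ℂ) ↪ Aut(ℂⁿ)` is a homotopy equivalence. -/
theorem gl_deformation_retract_of_aut (n : ℕ) (hn : 1 < n) :
    (∃ H : ℝ → C(Cn n, Cn n) → C(Cn n, Cn n),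
      ContinuousOn (fun w : ℝ × C(Cn n, Cn n) => H w.1 w.2)
        (Icc (0 : ℝ) 1 ×ˢ AutSet n) ∧
      (∀ t ∈ Icc (0 : ℝ) 1, ∀ f ∈ AutSet n, H t f ∈ AutSet n) ∧
      (∀ f ∈ AutSet n, H 1 f = f) ∧
      (∀ f ∈ AutSet n, H 0 f ∈ LinAutSet n) ∧
      (∀ f ∈ LinAutSet n, H 0 f = f)) ∧
    ∃ r : C(AutSet n, LinAutSet n),
      ((linAutInclusion n).comp r).Homotopic (ContinuousMap.id _) ∧
      (r.comp (linAutInclusion n)).Homotopic (ContinuousMap.id _) :=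
  gl_deformation_retract_of_aut_general n
end
end

section
/- Let n > 1, let λ : ℂⁿ → ℂ be a nonzero complex linear form, let v ∈ ℂⁿ be a vector with λ(v) = 0 and ⟨v, v⟩ = 1 (where ⟨z,w⟩ = Σ z_j \overline{w_j}), and let f : ℂ → ℂ be an entire function. Then the overshear map R(z) = z + (e^{f(λ(z))} − 1) ⟨z, v⟩ v is a holomorphic automorphism of ℂⁿ whose Jacobian determinant at any point z ∈ ℂⁿ equals e^{f(λ(z))}. -/
open scoped Topology
open Asymptotics Set Filter

noncomputable section

/-!
For fixed `λ` and `v`, write `R_g(z) = z + (e^{g(λ z)} − 1)⟨z,v⟩v`. Since `λ(v) = 0`, `R_g`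
preserves `λ`, and since `⟨v,v⟩ = 1` it multiplies `⟨z,v⟩` by `e^{g(λ z)}`; hence
`R_g ∘ R_h = R_{g+h}`, so `R_{-f}` is a holomorphic inverse of `R_f`. The derivative of `R_f`
at `z` is the identity plus a rank-one map `w ↦ L(w) v`, whose determinant is
`1 + L(v) = e^{f(λ z)}`.
-/
theorem LinearMap.det_id_add_smulRight {R M : Type*} [CommRing R] [AddCommGroup M] [Module R M]
    [Module.Free R M] [Module.Finite R M] (f : M →ₗ[R] R) (v : M) :
    LinearMap.det (LinearMap.id + f.smulRight v) = 1 + f v := by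
  classical
  set b := Module.Free.chooseBasis R M
  have hmat : LinearMap.toMatrix b b (LinearMap.id + f.smulRight v) =
      1 + Matrix.replicateCol Unit (b.repr v) * Matrix.replicateRow Unit (fun j => f (b j)) := by
    ext i j
    simp [LinearMap.toMatrix_apply, Matrix.one_apply, Finsupp.single_apply, Matrix.mul_apply,
      eq_comm, mul_comm]
  rw [← LinearMap.det_toMatrix b, hmat, Matrix.det_one_add_replicateCol_mul_replicateRow]
  conv_rhs => rw [← b.sum_repr v]
  simp only [map_sum, map_smul, smul_eq_mul, dotProduct, mul_comm]

theorem jacDet_eq_det_fderiv {n : ℕ} (f : Cn n → Cn n) (z : Cn n) :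
    jacDet f z = LinearMap.det (fderiv ℂ f z : Cn n →ₗ[ℂ] Cn n) := by
  rw [← LinearMap.det_toMatrix (EuclideanSpace.basisFun (Fin n) ℂ).toBasis]
  rfl

section Overshear

variable {E : Type*} [NormedAddCommGroup E] [InnerProductSpace ℂ E]

/-- `inner ℂ v z` is the paper's `⟨z, v⟩`: Mathlib's inner product is conjugate-linear in its
first argument. -/
def overshear (lam : E →ₗ[ℂ] ℂ) (v : E) (g : ℂ → ℂ) (z : E) : E :=
  z + (Complex.exp (g (lam z)) - 1) • (inner ℂ v z : ℂ) • v

variable {lam : E →ₗ[ℂ] ℂ} {v : E}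

theorem overshear_zero (z : E) : overshear lam v 0 z = z := by
  simp [overshear]

theorem map_overshear (hv : lam v = 0) (g : ℂ → ℂ) (z : E) :
    lam (overshear lam v g z) = lam z := by
  simp [overshear, hv]

theorem inner_overshear (hvv : (inner ℂ v v : ℂ) = 1) (g : ℂ → ℂ) (z : E) :
    (inner ℂ v (overshear lam v g z) : ℂ) = Complex.exp (g (lam z)) * inner ℂ v z := by
  simp only [overshear, inner_add_right, inner_smul_right, hvv]
  ring

theorem overshear_overshear (hv : lam v = 0) (hvv : (inner ℂ v v : ℂ) = 1) (g h : ℂ → ℂ)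
    (z : E) : overshear lam v g (overshear lam v h z) = overshear lam v (g + h) z := by
  rw [overshear, map_overshear hv, inner_overshear hvv, overshear, overshear, Pi.add_apply,
    Complex.exp_add, add_assoc, smul_smul, smul_smul, smul_smul, ← add_smul]
  congr 2
  ring

theorem leftInverse_overshear_neg (hv : lam v = 0) (hvv : (inner ℂ v v : ℂ) = 1)
    (g : ℂ → ℂ) : Function.LeftInverse (overshear lam v (-g)) (overshear lam v g) := by
  intro z
  rw [overshear_overshear hv hvv, neg_add_cancel, overshear_zero]

variable [FiniteDimensional ℂ E]

theorem differentiable_overshear {g : ℂ → ℂ} (hg : Differentiable ℂ g) :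
    Differentiable ℂ (overshear lam v g) :=
  differentiable_id.add <|
    ((hg.comp lam.toContinuousLinearMap.differentiable).cexp.sub_const 1).smul
      ((innerSL ℂ v).differentiable.smul_const v)

theorem hasFDerivAt_overshear {g : ℂ → ℂ} (hg : Differentiable ℂ g) (z : E) :
    HasFDerivAt (overshear lam v g)
      (ContinuousLinearMap.id ℂ E + ((Complex.exp (g (lam z)) - 1) • innerSL ℂ v +
        (inner ℂ v z : ℂ) • (Complex.exp (g (lam z)) * deriv g (lam z)) •
          lam.toContinuousLinearMap).smulRight v) z := by
  have hexp : HasFDerivAt (fun w => Complex.exp (g (lam w)) - 1)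
      ((Complex.exp (g (lam z)) * deriv g (lam z)) • lam.toContinuousLinearMap) z :=
    ((hg (lam z)).hasDerivAt.cexp.comp_hasFDerivAt z
      lam.toContinuousLinearMap.hasFDerivAt).sub_const 1
  convert (hasFDerivAt_id z).add ((hexp.mul (innerSL ℂ v).hasFDerivAt).smul_const v) using 1
  · ext w
    simp [overshear, smul_smul]
  · simp

theorem det_fderiv_overshear (hv : lam v = 0) (hvv : (inner ℂ v v : ℂ) = 1) {g : ℂ → ℂ}
    (hg : Differentiable ℂ g) (z : E) :
    LinearMap.det (fderiv ℂ (overshear lam v g) z : E →ₗ[ℂ] E) =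
      Complex.exp (g (lam z)) := by
  rw [(hasFDerivAt_overshear hg z).fderiv]
  refine (LinearMap.det_id_add_smulRight _ v).trans ?_
  simp [hv, hvv, -inner_self_eq_norm_sq_to_K]

end Overshear

theorem overshear_is_automorphism_general
    {n : ℕ} (lam : Cn n →ₗ[ℂ] ℂ)
    (v : Cn n) (hv : lam v = 0) (hvv : (inner ℂ v v : ℂ) = 1)
    (f : ℂ → ℂ) (hf : Differentiable ℂ f) :
    IsAutCn (fun z : Cn n =>
      z + (Complex.exp (f (lam z)) - 1) • (inner ℂ v z : ℂ) • v) ∧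
    ∀ z : Cn n,
      jacDet (fun w : Cn n =>
        w + (Complex.exp (f (lam w)) - 1) • (inner ℂ v w : ℂ) • v) z
      = Complex.exp (f (lam z)) := by
  have hleft := leftInverse_overshear_neg hv hvv f
  have hright : Function.RightInverse (overshear lam v (-f)) (overshear lam v f) := by
    have h := leftInverse_overshear_neg hv hvv (-f)
    rwa [neg_neg] at h
  refine ⟨⟨⟨hleft.injective, hright.surjective⟩, differentiable_overshear hf,
    overshear lam v (-f), differentiable_overshear hf.neg, hleft, hright⟩, fun z => ?_⟩
  rw [jacDet_eq_det_fderiv]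
  exact det_fderiv_overshear hv hvv hf z

/-- for a nonzero linear form `λ : ℂⁿ → ℂ`, a unit vector `v` with
`λ(v) = 0` and `⟨v,v⟩ = 1`, and an entire function `f : ℂ → ℂ`, the overshear
`R(z) = z + (e^{f(λ(z))} − 1)⟨z,v⟩v` is a holomorphic automorphism of `ℂⁿ` whose Jacobian
determinant at `z` equals `e^{f(λ(z))}`.  (Here `⟨z,w⟩ = ∑ z_j conj(w_j)`, which in Mathlib's
convention — conjugate-linear in the first variable — is `inner v z` for `⟨z,v⟩`.) -/
theorem overshear_is_automorphism
    {n : ℕ} (hn : 1 < n) (lam : Cn n →ₗ[ℂ] ℂ) (hlam : lam ≠ 0)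
    (v : Cn n) (hv : lam v = 0) (hvv : (inner ℂ v v : ℂ) = 1)
    (f : ℂ → ℂ) (hf : Differentiable ℂ f) :
    IsAutCn (fun z : Cn n =>
      z + (Complex.exp (f (lam z)) - 1) • (inner ℂ v z : ℂ) • v) ∧
    ∀ z : Cn n,
      jacDet (fun w : Cn n =>
        w + (Complex.exp (f (lam w)) - 1) • (inner ℂ v w : ℂ) • v) z
      = Complex.exp (f (lam z)) :=
  overshear_is_automorphism_general lam v hv hvv f hf

end
end
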